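/- arXiv:1701.08012 — 2 statements merged into one kernel-verified Lean document; each statement's English description precedes it below -/
import Mathlib

section
/- Let β ∈ (0, 1/2) and let h : [0,1]² → [0,∞) be measurable. Then there exists a constant C = C(β) such that ∫₀¹∫₀¹∫₀¹ |y−x|^{β−1} |z−x|^{β−1} h(y,z) dx dy dz ≤ C ∫₀¹∫₀¹ |y−z|^{2β−1} h(y,z) dy dz. -/
/-!
Enlarging the inner integral to all of `ℝ` and substituting `x = z + (y - z) u` gives
`∫ |y - x|^(β-1) |z - x|^(β-1) dx = |y - z|^(2β-1) ∫ |1 - u|^(β-1) |u|^(β-1) du`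
for `y ≠ z`.
The last integral is finite: its singularities at `0` and `1` are integrable because `β > 0`,
and its decay `|u|^(2β-2)` at infinity is integrable because `β < 1/2`.
-/

open MeasureTheory Set
open scoped ENNReal

lemma lintegral_eq_abs_mul_lintegral_comp_mul_left (f : ℝ → ℝ≥0∞) {c : ℝ} (hc : c ≠ 0) :
    ∫⁻ x, f x = ENNReal.ofReal |c| * ∫⁻ u, f (c * u) := by
  have hmap := lintegral_map_equiv f (MeasurableEquiv.mulLeft₀ c hc) (μ := volume)
  rw [MeasurableEquiv.coe_mulLeft₀, Real.map_volume_mul_left hc,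
    lintegral_smul_measure] at hmap
  rw [← hmap, smul_eq_mul, ← mul_assoc, ← ENNReal.ofReal_mul (abs_nonneg _), ← abs_mul,
    mul_inv_cancel₀ hc, abs_one, ENNReal.ofReal_one, one_mul]

lemma lintegral_abs_sub_rpow_mul_abs_sub_rpow (a b : ℝ) {y z : ℝ} (hyz : y ≠ z) :
    ∫⁻ x, ENNReal.ofReal (|y - x| ^ a) * ENNReal.ofReal (|z - x| ^ b)
      = ENNReal.ofReal (|y - z| ^ (a + b + 1)) *
        ∫⁻ u, ENNReal.ofReal (|1 - u| ^ a) * ENNReal.ofReal (|u| ^ b) := by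
  set c := y - z
  have hc : 0 < |c| := abs_pos.mpr (sub_ne_zero.mpr hyz)
  have hsubst (u : ℝ) :
      ENNReal.ofReal (|y - (z + c * u)| ^ a) * ENNReal.ofReal (|z - (z + c * u)| ^ b)
        = ENNReal.ofReal (|c| ^ (a + b)) *
          (ENNReal.ofReal (|1 - u| ^ a) * ENNReal.ofReal (|u| ^ b)) := by
    rw [show y - (z + c * u) = c * (1 - u) by ring, show z - (z + c * u) = c * -u by ring,
      abs_mul, abs_mul, abs_neg, Real.mul_rpow hc.le (abs_nonneg _),
      Real.mul_rpow hc.le (abs_nonneg _), Real.rpow_add hc]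
    simp only [ENNReal.ofReal_mul (by positivity : (0:ℝ) ≤ |c| ^ a),
      ENNReal.ofReal_mul (by positivity : (0:ℝ) ≤ |c| ^ b)]
    ring
  rw [← lintegral_add_left_eq_self _ z,
    lintegral_eq_abs_mul_lintegral_comp_mul_left _ (abs_pos.mp hc)]
  simp only [hsubst]
  rw [lintegral_const_mul _ (by fun_prop), ← mul_assoc, ← ENNReal.ofReal_mul hc.le,
    Real.rpow_add_one hc.ne', mul_comm |c|]

section

variable {p : ℝ}

lemma locallyIntegrable_abs_sub_rpow (a : ℝ) (hp : -1 < p) :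
    LocallyIntegrable (fun u : ℝ => |u - a| ^ p) := by
  have h0 : LocallyIntegrable (fun u : ℝ => |u| ^ p) :=
    locallyIntegrable_of_norm_le_rpow (by simp) (C := 1) (α := -p) (by simpa using neg_lt.mp hp)
      (.of_forall fun u => by simp [abs_of_nonneg (Real.rpow_nonneg (abs_nonneg u) p)])
      (by fun_prop : Measurable fun u : ℝ => |u| ^ p).aestronglyMeasurable
  rw [← map_add_right_eq_self volume (-a)] at h0
  exact (locallyIntegrable_map_homeomorph (Homeomorph.addRight (-a))).1 h0

lemma abs_one_sub_rpow_mul_abs_rpow_le (hp : p ≤ 0) (u : ℝ) :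
    |1 - u| ^ p * |u| ^ p ≤ (1 / 2) ^ p * (|u - 1| ^ p + |u| ^ p) := by
  rw [abs_sub_comm]
  have hA := Real.rpow_nonneg (abs_nonneg (u - 1)) p
  have hB := Real.rpow_nonneg (abs_nonneg u) p
  rcases le_total |u| (1 / 2) with hu | hu
  · have h : 1 / 2 ≤ |u - 1| := by
      linarith [abs_sub_abs_le_abs_sub 1 u, abs_sub_comm 1 u, abs_one (α := ℝ)]
    have : |u - 1| ^ p ≤ (1 / 2) ^ p := Real.rpow_le_rpow_of_nonpos (by norm_num) h hp
    nlinarith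
  · have : |u| ^ p ≤ (1 / 2) ^ p := Real.rpow_le_rpow_of_nonpos (by norm_num) hu hp
    nlinarith

lemma abs_one_sub_rpow_mul_abs_rpow_le_of_two_le (hp : p ≤ 0) {u : ℝ} (hu : 2 ≤ |u|) :
    |1 - u| ^ p * |u| ^ p ≤ ((1 + |u|) / 3) ^ (2 * p) := by
  have hpos : 0 < (1 + |u|) / 3 := by positivity
  have h : (1 + |u|) / 3 ≤ |1 - u| := by
    linarith [abs_sub_abs_le_abs_sub u 1, abs_sub_comm 1 u, abs_one (α := ℝ)]
  have h1 : |1 - u| ^ p ≤ ((1 + |u|) / 3) ^ p := Real.rpow_le_rpow_of_nonpos hpos h hp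
  have h2 : |u| ^ p ≤ ((1 + |u|) / 3) ^ p := Real.rpow_le_rpow_of_nonpos hpos (by linarith) hp
  rw [two_mul, Real.rpow_add hpos]
  exact mul_le_mul h1 h2 (by positivity) (by positivity)

lemma integrable_abs_one_sub_rpow_mul_abs_rpow (hp : p ∈ Ioo (-1) (-1 / 2)) :
    Integrable (fun u : ℝ => |1 - u| ^ p * |u| ^ p) := by
  obtain ⟨hp₁, hp₂⟩ := hp
  have hmeas : AEStronglyMeasurable (fun u : ℝ => |1 - u| ^ p * |u| ^ p) :=
    (by fun_prop : Measurable fun u : ℝ => |1 - u| ^ p * |u| ^ p).aestronglyMeasurable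
  have hnorm (u : ℝ) : ‖|1 - u| ^ p * |u| ^ p‖ = |1 - u| ^ p * |u| ^ p :=
    Real.norm_of_nonneg (by positivity)
  set K : Set ℝ := Icc (-2) 2
  have hK : IntegrableOn (fun u : ℝ => |1 - u| ^ p * |u| ^ p) K := by
    have hloc :=
      (locallyIntegrable_abs_sub_rpow 1 hp₁).add (locallyIntegrable_abs_sub_rpow 0 hp₁)
    simp only [sub_zero] at hloc
    refine ((hloc.integrableOn_isCompact isCompact_Icc).const_mul ((1 / 2) ^ p)).mono'
      hmeas.restrict (.of_forall fun u => ?_)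
    rw [hnorm]
    exact abs_one_sub_rpow_mul_abs_rpow_le (by linarith) u
  have hKc : IntegrableOn (fun u : ℝ => |1 - u| ^ p * |u| ^ p) Kᶜ := by
    have hdom : Integrable (fun u : ℝ => (1 / 3) ^ (2 * p) * (1 + ‖u‖) ^ (-(-2 * p))) :=
      (integrable_one_add_norm (by rw [Module.finrank_self, Nat.cast_one]; linarith)).const_mul _
    refine hdom.integrableOn.mono' hmeas.restrict (ae_restrict_of_forall_mem
      measurableSet_Icc.compl fun u hu => ?_)
    have hu : 2 ≤ |u| := (not_le.mp fun h => hu (abs_le.mp h)).le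
    rw [hnorm, Real.norm_eq_abs, neg_mul, neg_neg,
      ← Real.mul_rpow (by norm_num : (0 : ℝ) ≤ 1 / 3) (by positivity : 0 ≤ 1 + |u|),
      one_div_mul_eq_div]
    exact abs_one_sub_rpow_mul_abs_rpow_le_of_two_le (by linarith) hu
  simpa [K] using hK.union hKc

lemma lintegral_abs_one_sub_rpow_mul_abs_rpow_lt_top (hp : p ∈ Ioo (-1) (-1 / 2)) :
    ∫⁻ u, ENNReal.ofReal (|1 - u| ^ p) * ENNReal.ofReal (|u| ^ p) < ∞ := by
  simpa only [ENNReal.ofReal_mul (Real.rpow_nonneg (abs_nonneg _) _)] using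
    (integrable_abs_one_sub_rpow_mul_abs_rpow hp).lintegral_lt_top

end

/-- For `β ∈ (0,1/2)` and measurable `h : [0,1]² → [0,∞]`, the triple integral of
`|y−x|^{β−1}|z−x|^{β−1} h(y,z)` is bounded by `C` times the double integral of
`|y−z|^{2β−1} h(y,z)`. -/
theorem stmt_3 (β : ℝ) (hβ : β ∈ Set.Ioo (0:ℝ) (1/2)) :
    ∃ C > 0, ∀ h : ℝ → ℝ → ℝ≥0∞, Measurable (Function.uncurry h) →
      (∫⁻ y in Set.Ioo (0:ℝ) 1, ∫⁻ z in Set.Ioo (0:ℝ) 1, ∫⁻ x in Set.Ioo (0:ℝ) 1,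
          ENNReal.ofReal (|y - x| ^ (β - 1)) * ENNReal.ofReal (|z - x| ^ (β - 1)) * h y z)
        ≤ ENNReal.ofReal C *
          ∫⁻ y in Set.Ioo (0:ℝ) 1, ∫⁻ z in Set.Ioo (0:ℝ) 1,
            ENNReal.ofReal (|y - z| ^ (2 * β - 1)) * h y z := by
  set I := ∫⁻ u : ℝ, ENNReal.ofReal (|1 - u| ^ (β - 1)) * ENNReal.ofReal (|u| ^ (β - 1))
  have hI : I ≠ ∞ := (lintegral_abs_one_sub_rpow_mul_abs_rpow_lt_top
    ⟨by linarith [hβ.1], by linarith [hβ.2]⟩).ne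
  obtain ⟨C, hC, hIC⟩ : ∃ C > 0, I ≤ ENNReal.ofReal C :=
    ⟨I.toReal + 1, by positivity, ENNReal.ofReal_toReal hI ▸ ENNReal.ofReal_le_ofReal (by simp)⟩
  refine ⟨C, hC, fun h _ => ?_⟩
  have hkernel (y z : ℝ) (hzy : z ≠ y) :
      ∫⁻ x in Ioo 0 1, ENNReal.ofReal (|y - x| ^ (β - 1)) * ENNReal.ofReal (|z - x| ^ (β - 1))
        * h y z ≤ ENNReal.ofReal C * (ENNReal.ofReal (|y - z| ^ (2 * β - 1)) * h y z) :=
    calc _ = (∫⁻ x in Ioo 0 1, ENNReal.ofReal (|y - x| ^ (β - 1)) *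
          ENNReal.ofReal (|z - x| ^ (β - 1))) * h y z := lintegral_mul_const _ (by fun_prop)
      _ ≤ ENNReal.ofReal (|y - z| ^ (2 * β - 1)) * I * h y z := by
        rw [show 2 * β - 1 = β - 1 + (β - 1) + 1 by ring,
          ← lintegral_abs_sub_rpow_mul_abs_sub_rpow _ _ hzy.symm]
        gcongr
        exact Measure.restrict_le_self
      _ ≤ _ := by
        rw [mul_comm _ I, mul_assoc]
        gcongr
  -- `hkernel` fails on the null diagonal `z = y`, where `|y - z| ^ (2 * β - 1) = 0` (`0 ^ s = 0`).
  calc _ ≤ ∫⁻ y in Ioo 0 1, ∫⁻ z in Ioo 0 1,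
        ENNReal.ofReal C * (ENNReal.ofReal (|y - z| ^ (2 * β - 1)) * h y z) :=
        lintegral_mono fun y => lintegral_mono_ae <|
          ((countable_singleton y).ae_notMem _).mono fun z => hkernel y z
    _ = _ := by simp only [lintegral_const_mul' _ _ ENNReal.ofReal_ne_top]
end

section
/- Let m ≥ 1 be an integer, H₀ ∈ (1 − 1/(2m), 1), and let L : (0,∞) → (0,∞) be slowly varying at infinity and bounded away from 0 and +∞ on every compact subset of (0,∞). Let (a_n)_{n≥m} be nonnegative reals with Σ_{n≥m} a_n < ∞, let ρ : (0,∞) → [−1,1] satisfy ρ(x)/(x^{2H₀−2}L(x)²) → c as x → +∞ for some c > 0, and set γ(x) = Σ_{n=m}^∞ a_n ρ(x)^n. Then there exist constants C > 0 and x₀ > 0 such that |γ(x)| ≤ C · L(x)^{2m} · x^{−2m(1−H₀)} for all x ≥ x₀. -/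
open Filter Topology Asymptotics

/-!
Since `|ρ| ≤ 1`, every term of `γ = ∑ aₙ ρⁿ` is dominated by `aₙ |ρ|^m`, so `γ = O(ρ^m)`.
The asymptotics of `ρ` give `ρ(x) = O(x^{2H₀-2} L(x)²)`, and raising this to the `m`-th power
yields the claimed bound `γ(x) = O(L(x)^{2m} x^{-2m(1-H₀)})`.
-/

lemma abs_tsum_mul_pow_add_le {a : ℕ → ℝ} (ha : ∀ n, 0 ≤ a n) (hs : Summable a)
    {r : ℝ} (hr : |r| ≤ 1) (m : ℕ) :
    |∑' n, a n * r ^ (m + n)| ≤ (∑' n, a n) * |r| ^ m := by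
  have hterm : ∀ n, |a n * r ^ (m + n)| ≤ a n * |r| ^ m := fun n => by
    rw [abs_mul, abs_of_nonneg (ha n), abs_pow, pow_add]
    exact mul_le_mul_of_nonneg_left
      (mul_le_of_le_one_right (by positivity) (pow_le_one₀ (abs_nonneg r) hr)) (ha n)
  have hs' : Summable fun n => a n * |r| ^ m := hs.mul_right _
  have hs_abs : Summable fun n => ‖a n * r ^ (m + n)‖ :=
    hs'.of_nonneg_of_le (fun _ => norm_nonneg _) hterm
  calc |∑' n, a n * r ^ (m + n)| ≤ ∑' n, ‖a n * r ^ (m + n)‖ := norm_tsum_le_tsum_norm hs_abs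
    _ ≤ ∑' n, a n * |r| ^ m := hs_abs.tsum_le_tsum hterm hs'
    _ = (∑' n, a n) * |r| ^ m := tsum_mul_right

lemma isBigO_tsum_mul_pow_add {α : Type*} {l : Filter α} {a : ℕ → ℝ} (ha : ∀ n, 0 ≤ a n)
    (hs : Summable a) {ρ : α → ℝ} (hρ : ∀ᶠ x in l, |ρ x| ≤ 1) (m : ℕ) :
    (fun x => ∑' n, a n * ρ x ^ (m + n)) =O[l] fun x => ρ x ^ m :=
  IsBigO.of_bound (∑' n, a n) <| hρ.mono fun x hx => by
    simpa only [Real.norm_eq_abs, abs_pow] using abs_tsum_mul_pow_add_le ha hs hx m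

lemma rpow_mul_sq_pow_eq {x : ℝ} (hx : 0 ≤ x) (H ℓ : ℝ) (m : ℕ) :
    (x ^ (2 * H - 2) * ℓ ^ 2) ^ m = ℓ ^ (2 * m) * x ^ (-(2 * (m : ℝ) * (1 - H))) := by
  rw [mul_pow, ← pow_mul, mul_comm 2 m, mul_comm, ← Real.rpow_natCast (x ^ _) m,
    ← Real.rpow_mul hx]
  ring_nf

lemma exists_pos_bound_of_isBigO_atTop {f g : ℝ → ℝ} (h : f =O[atTop] g)
    (hg : ∀ᶠ x in atTop, 0 ≤ g x) :
    ∃ C > 0, ∃ x₀ > 0, ∀ x ≥ x₀, |f x| ≤ C * g x := by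
  obtain ⟨C, hC, hfg⟩ := h.exists_pos
  obtain ⟨x₀, hx₀⟩ := eventually_atTop.1 (hfg.bound.and hg)
  refine ⟨C, hC, max x₀ 1, by positivity, fun x hx => ?_⟩
  obtain ⟨hbound, hgx⟩ := hx₀ x (le_of_max_le_left hx)
  rwa [Real.norm_eq_abs, Real.norm_eq_abs, abs_of_nonneg hgx] at hbound

theorem stmt_9_general (m : ℕ) (H₀ : ℝ)
    (L : ℝ → ℝ) (hLpos : ∀ x > 0, 0 < L x)
    (a : ℕ → ℝ) (ha : ∀ n, m ≤ n → 0 ≤ a n) (hsum : Summable (fun n => a (m + n)))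
    (ρ : ℝ → ℝ) (hρr : ∀ x > 0, ρ x ∈ Set.Icc (-1:ℝ) 1)
    (c : ℝ)
    (hρ : Tendsto (fun x => ρ x / (x ^ (2*H₀ - 2) * L x ^ 2)) atTop (𝓝 c))
    (γ : ℝ → ℝ) (hγ : ∀ x, γ x = ∑' n : ℕ, a (m + n) * ρ x ^ (m + n)) :
    ∃ C > 0, ∃ x₀ > 0, ∀ x ≥ x₀,
      |γ x| ≤ C * L x ^ (2*m) * x ^ (-(2*(m:ℝ)*(1-H₀))) := by
  have hpos : ∀ᶠ x in atTop, (0 : ℝ) < x := eventually_gt_atTop 0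
  have hγρ : γ =O[atTop] fun x => ρ x ^ m := by
    simp only [funext hγ]
    exact isBigO_tsum_mul_pow_add (fun n => ha _ (Nat.le_add_right m n)) hsum
      (hpos.mono fun x hx => abs_le.2 (hρr x hx)) m
  have hρD : ρ =O[atTop] fun x => x ^ (2*H₀ - 2) * L x ^ 2 :=
    isBigO_of_div_tendsto_nhds (hpos.mono fun x hx hD => absurd hD
      (by have := hLpos x hx; positivity)) c hρ
  have hD : (fun x => (x ^ (2*H₀ - 2) * L x ^ 2) ^ m) =ᶠ[atTop]
      fun x => L x ^ (2*m) * x ^ (-(2*(m:ℝ)*(1-H₀))) :=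
    hpos.mono fun x hx => rpow_mul_sq_pow_eq hx.le H₀ (L x) m
  obtain ⟨C, hC, x₀, hx₀, hbound⟩ := exists_pos_bound_of_isBigO_atTop
    (hγρ.trans ((hρD.pow m).trans_eventuallyEq hD))
    (hpos.mono fun x hx => by have := hLpos x hx; positivity)
  exact ⟨C, hC, x₀, hx₀, fun x hx => (hbound x hx).trans_eq (mul_assoc _ _ _).symm⟩

/-- Uniform bound on the autocovariance of the potential: under the same assumptions as the
asymptotics lemma, with `L` bounded away from `0` and `∞` on compacts, there are `C > 0` and
`x₀ > 0` with `|γ(x)| ≤ C L(x)^{2m} x^{−2m(1−H₀)}` for all `x ≥ x₀`. -/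
theorem stmt_9 (m : ℕ) (hm : 1 ≤ m) (H₀ : ℝ) (hH₀ : H₀ ∈ Set.Ioo (1 - 1/(2*(m:ℝ))) 1)
    (L : ℝ → ℝ) (hLpos : ∀ x > 0, 0 < L x)
    (hSV : ∀ a > 0, Tendsto (fun u => L (a * u) / L u) atTop (𝓝 1))
    (hB : ∀ K : Set ℝ, K ⊆ Set.Ioi 0 → IsCompact K →
      ∃ c c' : ℝ, 0 < c ∧ c ≤ c' ∧ ∀ u ∈ K, c ≤ L u ∧ L u ≤ c')
    (a : ℕ → ℝ) (ha : ∀ n, m ≤ n → 0 ≤ a n) (hsum : Summable (fun n => a (m + n)))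
    (ρ : ℝ → ℝ) (hρr : ∀ x > 0, ρ x ∈ Set.Icc (-1:ℝ) 1)
    (c : ℝ) (hc : 0 < c)
    (hρ : Tendsto (fun x => ρ x / (x ^ (2*H₀ - 2) * L x ^ 2)) atTop (𝓝 c))
    (γ : ℝ → ℝ) (hγ : ∀ x, γ x = ∑' n : ℕ, a (m + n) * ρ x ^ (m + n)) :
    ∃ C > 0, ∃ x₀ > 0, ∀ x ≥ x₀,
      |γ x| ≤ C * L x ^ (2*m) * x ^ (-(2*(m:ℝ)*(1-H₀))) :=
  stmt_9_general m H₀ L hLpos a ha hsum ρ hρr c hρ γ hγ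
end
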